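/- If X is a compact Hausdorff LOTS and μ is a regular (complex or finite positive) Borel measure on X, then the closed support of μ is separable. -/

import Mathlib

/-!
Inner regularity makes the distribution functions `F y = μ (Iic y)` and `G y = μ (Iio y)` of `μ`
gapless: for `0 ≤ p < q ≤ μ X` some `y` has `p < F y` and `G y < q` (take `y` the infimum of
`{F > p}`). Pick such a `y` for every pair of rationals. If `x` is in the support and `I` is an
order-connected neighbourhood of `x`, then `μ I > 0` separates `μ (Iio x \ I)` from
`μ (Iio x ∪ I)`, and every `y` picked for rationals in between lies in `I`.
-/

open MeasureTheory Set

theorem exists_countable_forall_exists_mem {ι X : Type*} [Countable ι] (P : ι → X → Prop) :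
    ∃ D : Set X, D.Countable ∧ ∀ i, (∃ x, P i x) → ∃ x ∈ D, P i x :=
  ⟨range fun i : {i // ∃ x, P i x} => i.2.choose, countable_range _,
    fun i hi => ⟨_, mem_range_self ⟨i, hi⟩, hi.choose_spec⟩⟩

namespace MeasureTheory

variable {X : Type*} [LinearOrder X] [MeasurableSpace X] {μ : Measure X} [IsFiniteMeasure μ]

theorem _root_.Set.OrdConnected.mem_of_lt_measureReal_Iic_of_measureReal_Iio_lt {I : Set X}
    (hI : I.OrdConnected) {x d : X} (hx : x ∈ I)
    (hlow : μ.real (Iio x \ I) < μ.real (Iic d))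
    (hhigh : μ.real (Iio d) < μ.real (Iio x ∪ I)) :
    d ∈ I := by
  by_contra hd
  rcases lt_trichotomy d x with hdx | rfl | hxd
  · have : Iic d ⊆ Iio x \ I := fun z (hzd : z ≤ d) =>
      ⟨hzd.trans_lt hdx, fun hz => hd (hI.out hz hx ⟨hzd, hdx.le⟩)⟩
    exact (measureReal_mono this).not_gt hlow
  · exact hd hx
  · have : Iio x ∪ I ⊆ Iio d := by
      rintro z (hzx | hz)
      · exact hzx.trans hxd
      · exact lt_of_not_ge fun hdz => hd (hI.out hx hz ⟨hxd.le, hdz⟩)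
    exact (measureReal_mono this).not_gt hhigh

variable [TopologicalSpace X] [μ.Regular]

theorem _root_.IsOpen.exists_lt_measureReal_inter_Iic [ClosedIciTopology X] {U : Set X}
    (hU : IsOpen U) {r : ℝ} (hr : 0 ≤ r) (hrU : r < μ.real U) :
    ∃ z ∈ U, r < μ.real (U ∩ Iic z) := by
  rw [measureReal_def, ← ENNReal.ofReal_lt_iff_lt_toReal hr (measure_ne_top μ U)] at hrU
  obtain ⟨K, hKU, hK, hrK⟩ := hU.exists_lt_isCompact hrU
  obtain ⟨z, hzK, hzmax⟩ := hK.exists_isGreatest (nonempty_of_measure_ne_zero hrK.ne_bot)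
  refine ⟨z, hKU hzK, ?_⟩
  calc r < μ.real K := (ENNReal.ofReal_lt_iff_lt_toReal hr (measure_ne_top μ K)).1 hrK
    _ ≤ μ.real (U ∩ Iic z) := measureReal_mono fun y hy => ⟨hKU hy, hzmax hy⟩

theorem _root_.IsOpen.exists_lt_measureReal_inter_Ici [ClosedIicTopology X] {U : Set X}
    (hU : IsOpen U) {r : ℝ} (hr : 0 ≤ r) (hrU : r < μ.real U) :
    ∃ z ∈ U, r < μ.real (U ∩ Ici z) := by
  rw [measureReal_def, ← ENNReal.ofReal_lt_iff_lt_toReal hr (measure_ne_top μ U)] at hrU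
  obtain ⟨K, hKU, hK, hrK⟩ := hU.exists_lt_isCompact hrU
  obtain ⟨z, hzK, hzmin⟩ := hK.exists_isLeast (nonempty_of_measure_ne_zero hrK.ne_bot)
  refine ⟨z, hKU hzK, ?_⟩
  calc r < μ.real K := (ENNReal.ofReal_lt_iff_lt_toReal hr (measure_ne_top μ K)).1 hrK
    _ ≤ μ.real (U ∩ Ici z) := measureReal_mono fun y hy => ⟨hKU hy, hzmin hy⟩

theorem exists_lt_measureReal_Iic_and_measureReal_Iio_lt [OrderTopology X] [CompactSpace X]
    [OpensMeasurableSpace X] {p q : ℝ} (hp : 0 ≤ p) (hpq : p < q) (hq : q ≤ μ.real univ) :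
    ∃ y, p < μ.real (Iic y) ∧ μ.real (Iio y) < q := by
  set A := {y | p < μ.real (Iic y)}
  have hA : A.Nonempty := by
    obtain ⟨z, -, hz⟩ := isOpen_univ.exists_lt_measureReal_inter_Iic (μ := μ) hp (by linarith)
    exact ⟨z, by rwa [univ_inter] at hz⟩
  obtain ⟨y, hyA, hy⟩ := isClosed_closure.isCompact.exists_isLeast hA.closure
  have lower : ∀ a ∈ A, y ≤ a := fun a ha => hy (subset_closure ha)
  have upper : ∀ z, y < z → z ∈ A := fun z hyz => by
    obtain ⟨a, haz, ha⟩ := mem_closure_iff.1 hyA (Iio z) isOpen_Iio hyz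
    exact ha.trans_le (measureReal_mono (Iic_subset_Iic.2 (le_of_lt haz)))
  have hIio : μ.real (Iio y) ≤ p := by
    by_contra! h
    obtain ⟨z, hzy, hz⟩ := isOpen_Iio.exists_lt_measureReal_inter_Iic hp h
    exact (lower z (hz.trans_le (measureReal_mono inter_subset_right))).not_gt hzy
  by_cases hyA' : y ∈ A
  · exact ⟨y, hyA', hIio.trans_lt hpq⟩
  -- Now `A = Ioi y`; inner regularity of `Ioi y` makes `z ↦ μ (Iio z)` right continuous at `y`.
  have hIic : μ.real (Iic y) ≤ p := not_lt.1 hyA'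
  have hIoi : μ.real univ - q < μ.real (Ioi y) := by
    rw [← compl_Iic, measureReal_compl measurableSet_Iic]
    linarith
  obtain ⟨z, hyz, hz⟩ := isOpen_Ioi.exists_lt_measureReal_inter_Ici (by linarith) hIoi
  refine ⟨z, upper z hyz, ?_⟩
  have hIci : μ.real (Ioi y ∩ Ici z) ≤ μ.real (Ici z) := measureReal_mono inter_subset_right
  rw [← compl_Ici, measureReal_compl measurableSet_Ici]
  linarith

theorem Measure.isSeparable_support [OrderTopology X] [CompactSpace X] [BorelSpace X] :
    TopologicalSpace.IsSeparable μ.support := by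
  obtain ⟨D, hD, hDwit⟩ := exists_countable_forall_exists_mem
    fun (pq : ℚ × ℚ) y => pq.1 < μ.real (Iic y) ∧ μ.real (Iio y) < pq.2
  refine ⟨D, hD, fun x hx => mem_closure_iff_nhds.2 fun U hU => ?_⟩
  set I := ordConnectedComponent U x
  have hIc : I.OrdConnected := inferInstance
  have hxI : x ∈ I := self_mem_ordConnectedComponent.2 (mem_of_mem_nhds hU)
  have hI : 0 < μ.real I := by
    have := (μ.mem_support_iff_forall x).1 hx I (ordConnectedComponent_mem_nhds.2 hU)
    exact ENNReal.toReal_pos this.ne' (measure_ne_top μ I)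
  have hgap : μ.real (Iio x \ I) < μ.real (Iio x ∪ I) := by
    rw [← sdiff_union_self, measureReal_union disjoint_sdiff_left hIc.measurableSet]
    linarith
  obtain ⟨p, hp, hpe⟩ := exists_rat_btwn hgap
  obtain ⟨q, hpq, hq⟩ := exists_rat_btwn hpe
  obtain ⟨d, hdD, hd⟩ := hDwit (p, q) <| exists_lt_measureReal_Iic_and_measureReal_Iio_lt
    (measureReal_nonneg.trans hp.le) (mod_cast hpq) (hq.le.trans (measureReal_mono (subset_univ _)))
  refine ⟨d, ordConnectedComponent_subset (x := x) ?_, hdD⟩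
  exact hIc.mem_of_lt_measureReal_Iic_of_measureReal_Iio_lt hxI
    (hp.trans hd.1) (hd.2.trans hq)

end MeasureTheory

theorem stmt18 {X : Type*} [LinearOrder X] [TopologicalSpace X] [OrderTopology X]
    [CompactSpace X] [MeasurableSpace X] [BorelSpace X]
    (μ : Measure X) [IsFiniteMeasure μ] [μ.Regular] :
    TopologicalSpace.IsSeparable
      ((⋃₀ {U : Set X | IsOpen U ∧ μ U = 0})ᶜ) := by
  rw [← Measure.compl_support_eq_sUnion, compl_compl]
  exact μ.isSeparable_support
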